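/- Let m, h > 0 and let V : ℝ → ℝ be differentiable. For all real q_ℓ, q_ξ, q_{1−ξ}, q_r, the two internal Euler–Lagrange equations ∂L_d/∂q_ξ = 0 and ∂L_d/∂q_{1−ξ} = 0 hold simultaneously if and only if q_ξ − (h²/(30m))(V′(q_{1−ξ}) + 2V′(q_ξ)) = ((5+√5)/10) q_ℓ + ((5−√5)/10) q_r and q_{1−ξ} − (h²/(30m))(2V′(q_{1−ξ}) + V′(q_ξ)) = ((5−√5)/10) q_ℓ + ((5+√5)/10) q_r. -/

import Mathlib

/-- The nonlinear discrete Lagrangian with mass `m`, time step `h` and potential `V`. -/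
noncomputable def LdNL (m h : ℝ) (V : ℝ → ℝ) (qℓ qξ q1mξ qr : ℝ) : ℝ :=
  (m / (12 * h)) *
    (26 * (qℓ^2 + qr^2) - 2 * qℓ * qr + 50 * (qξ^2 - qξ * q1mξ + q1mξ^2)
      - 25 * (qℓ + qr) * (qξ + q1mξ)
      - 15 * Real.sqrt 5 * (qℓ - qr) * (qξ - q1mξ))
  - (h/12) * (V qℓ + 5 * (V qξ + V q1mξ) + V qr)

/-! In each internal node `L_d` is a quadratic polynomial minus `(5h/12) V`, so the two internal
Euler–Lagrange equations form a linear system in `(q_ξ, q_{1−ξ})` whose right-hand side involves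
`V'(q_ξ)` and `V'(q_{1−ξ})`; the system has matrix `[[2, -1], [-1, 2]]` and inverting it gives the
stated implicit equations. Reversing time (`q_ℓ ↔ q_r`, `q_ξ ↔ q_{1−ξ}`) leaves `L_d` unchanged,
so the second equation is the mirror image of the first. -/

section

variable {m h : ℝ} {V : ℝ → ℝ} {qℓ qξ q1mξ qr v : ℝ}

theorem LdNL_reverse (m h : ℝ) (V : ℝ → ℝ) (qℓ qξ q1mξ qr : ℝ) :
    LdNL m h V qℓ qξ q1mξ qr = LdNL m h V qr q1mξ qξ qℓ := by
  unfold LdNL; ring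

theorem hasDerivAt_LdNL_qξ (hV : HasDerivAt V v qξ) :
    HasDerivAt (fun x => LdNL m h V qℓ x q1mξ qr)
      (m / (12 * h) * (100 * qξ - 50 * q1mξ - 25 * (qℓ + qr) - 15 * Real.sqrt 5 * (qℓ - qr))
        - 5 * h / 12 * v) qξ := by
  have hx := hasDerivAt_id' (x := qξ)
  have hkin := (((((hx.pow 2).sub (hx.mul_const q1mξ)).add_const (q1mξ ^ 2)).const_mul 50).const_add
    (26 * (qℓ^2 + qr^2) - 2 * qℓ * qr)).sub ((hx.add_const q1mξ).const_mul (25 * (qℓ + qr)))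
      |>.sub ((hx.sub_const q1mξ).const_mul (15 * Real.sqrt 5 * (qℓ - qr)))
  have hpot := (((hV.add_const (V q1mξ)).const_mul 5).const_add (V qℓ)).add_const (V qr)
  exact ((hkin.const_mul (m / (12 * h))).sub (hpot.const_mul (h / 12))).congr_deriv
    (by norm_num; ring)

theorem hasDerivAt_LdNL_q1mξ (hV : HasDerivAt V v q1mξ) :
    HasDerivAt (fun y => LdNL m h V qℓ qξ y qr)
      (m / (12 * h) * (100 * q1mξ - 50 * qξ - 25 * (qr + qℓ) - 15 * Real.sqrt 5 * (qr - qℓ))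
        - 5 * h / 12 * v) q1mξ := by
  have hrev : (fun y => LdNL m h V qℓ qξ y qr) = fun y => LdNL m h V qr y qξ qℓ :=
    funext fun y => LdNL_reverse m h V qℓ qξ y qr
  exact hrev ▸ hasDerivAt_LdNL_qξ hV

end

theorem internal_EL_linear_iff {m h : ℝ} (hm : m ≠ 0) (hh : h ≠ 0) (s qℓ qξ q1mξ qr v w : ℝ) :
    (m / (12 * h) * (100 * qξ - 50 * q1mξ - 25 * (qℓ + qr) - 15 * s * (qℓ - qr))
          - 5 * h / 12 * v = 0
      ∧ m / (12 * h) * (100 * q1mξ - 50 * qξ - 25 * (qr + qℓ) - 15 * s * (qr - qℓ))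
          - 5 * h / 12 * w = 0)
    ↔ (qξ - h^2 / (30 * m) * (w + 2 * v) = (5 + s) / 10 * qℓ + (5 - s) / 10 * qr
        ∧ q1mξ - h^2 / (30 * m) * (2 * w + v) = (5 - s) / 10 * qℓ + (5 + s) / 10 * qr) := by
  constructor
  · rintro ⟨e₁, e₂⟩
    field_simp at e₁ e₂ ⊢
    constructor
    · linear_combination 4 * e₁ + 2 * e₂
    · linear_combination 2 * e₁ + 4 * e₂
  · rintro ⟨f₁, f₂⟩
    field_simp at f₁ f₂ ⊢
    constructor
    · linear_combination (1 / 3 : ℝ) * f₁ - (1 / 6 : ℝ) * f₂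
    · linear_combination (1 / 3 : ℝ) * f₂ - (1 / 6 : ℝ) * f₁

/-- The internal Euler–Lagrange equations of the nonlinear Lobatto scheme hold iff the
two stated implicit equations for the internal values hold. -/
theorem internal_EL_nonlinear_iff (m h : ℝ) (hm : 0 < m) (hh : 0 < h)
    (V : ℝ → ℝ) (hV : Differentiable ℝ V) (qℓ qξ q1mξ qr : ℝ) :
    (deriv (fun x => LdNL m h V qℓ x q1mξ qr) qξ = 0
      ∧ deriv (fun y => LdNL m h V qℓ qξ y qr) q1mξ = 0)
    ↔ (qξ - (h^2/(30*m)) * (deriv V q1mξ + 2 * deriv V qξ)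
          = ((5 + Real.sqrt 5)/10) * qℓ + ((5 - Real.sqrt 5)/10) * qr
        ∧ q1mξ - (h^2/(30*m)) * (2 * deriv V q1mξ + deriv V qξ)
          = ((5 - Real.sqrt 5)/10) * qℓ + ((5 + Real.sqrt 5)/10) * qr) := by
  rw [(hasDerivAt_LdNL_qξ (hV qξ).hasDerivAt).deriv,
    (hasDerivAt_LdNL_q1mξ (hV q1mξ).hasDerivAt).deriv]
  exact internal_EL_linear_iff hm.ne' hh.ne' _ _ _ _ _ _ _
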